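/- Let C = (Z_n, E) be the cycle with edges {v, v+1} (mod n), n ≥ 3, and let w ∈ Z_n and v_0, …, v_{k+1} ∈ Z_n \ {w} be distinct nodes such that the cyclic sequence ⟨w, v_0, …, v_{k+1}⟩ is true to C, where 0 ≤ k ≤ n−3. Then the glider inequality Σ_{i=0}^k x_{v_i v_{i+1}} − Σ_{i=1}^k x_{v_i w} ≤ 1 is valid for LMC(C): every characteristic vector of a multicut of K_n lifted from C satisfies it. -/

import Mathlib

open Finset

open scoped Classical

variable {V : Type*}

/-- A decomposition of a graph `G`: a partition of the node set all of whose blocks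
induce connected subgraphs. -/
def IsDecomposition (G : SimpleGraph V) (P : Set (Set V)) : Prop :=
  Setoid.IsPartition P ∧ ∀ U ∈ P, (G.induce U).Connected

/-- Two nodes lie in a common block of `P`. -/
def SameBlock (P : Set (Set V)) (u v : V) : Prop :=
  ∃ U ∈ P, u ∈ U ∧ v ∈ U

/-- The edge `e` straddles two distinct blocks of `P`. -/
def Crosses (P : Set (Set V)) (e : Sym2 V) : Prop :=
  ∃ u v, e = s(u, v) ∧ ¬ SameBlock P u v

/-- The multicut of `G` induced by a decomposition `P`. -/
def inducedMulticut (G : SimpleGraph V) (P : Set (Set V)) : Set (Sym2 V) :=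
  {e | e ∈ G.edgeSet ∧ Crosses P e}

/-- `M` is a multicut of `G`. -/
def IsMulticut (G : SimpleGraph V) (M : Set (Sym2 V)) : Prop :=
  ∃ P, IsDecomposition G P ∧ M = inducedMulticut G P

/-- The characteristic vector (in the ambient space `Sym2 V → ℝ`, with coordinates
outside the edge set of `H` pinned to `0`) of the multicut of `H` induced by `P`. -/
noncomputable def multicutVec (H : SimpleGraph V) (P : Set (Set V)) : Sym2 V → ℝ :=
  fun e => if e ∈ H.edgeSet ∧ Crosses P e then 1 else 0

/-- Characteristic vectors of multicuts of `H` lifted from `G`. -/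
def liftedVectors (G H : SimpleGraph V) : Set (Sym2 V → ℝ) :=
  {x | ∃ P, IsDecomposition G P ∧ x = multicutVec H P}

/-- The lifted multicut polytope with respect to `G` and `H`. -/
def LMC (G H : SimpleGraph V) : Set (Sym2 V → ℝ) :=
  convexHull ℝ (liftedVectors G H)

/-- The inequality `f x ≤ b` is valid for `P` and its equality set has affine dimension
`|E ∪ F| - 1`, i.e. one less than the dimension of the corresponding lifted multicut
polytope for the augmented graph `H`. -/
def DefinesFacet (H : SimpleGraph V) (P : Set (Sym2 V → ℝ))
    (f : (Sym2 V → ℝ) → ℝ) (b : ℝ) : Prop :=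
  (∀ x ∈ P, f x ≤ b) ∧
  Module.finrank ℝ (affineSpan ℝ {x | x ∈ P ∧ f x = b}).direction + 1 = Nat.card H.edgeSet

/-- The cycle on `Z_n` (for `n ≥ 3`): `a` is adjacent to `a + 1`. -/
def cycleGraph (n : ℕ) : SimpleGraph (ZMod n) :=
  SimpleGraph.fromRel (fun a b => b = a + 1)

/-!
The block `B` of `w` induces a connected subgraph of the cycle, so it is a cyclic interval
through `w`: for each `u ∈ B`, one of the two arcs between `w` and `u` lies in `B`. Ordering
`v_0, …, v_{k+1}` by their distance from `w`, the indices of the nodes in `B` therefore form a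
prefix and a suffix. Apart from the single step leaving the prefix, every cut step
`v_i v_{i+1}` starts at a node `v_i ∉ B` with `1 ≤ i ≤ k`, and that step is paid for by
`x_{v_i w} = 1`.
-/

theorem crosses_mk_iff {V : Type*} {P : Set (Set V)} {u v : V} :
    Crosses P s(u, v) ↔ ¬ SameBlock P u v := by
  refine ⟨?_, fun h => ⟨u, v, rfl, h⟩⟩
  rintro ⟨u', v', he, hns⟩
  rcases Sym2.eq_iff.1 he with ⟨rfl, rfl⟩ | ⟨rfl, rfl⟩
  · exact hns
  · exact fun ⟨U, hU, hu, hv⟩ => hns ⟨U, hU, hv, hu⟩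

theorem multicutVec_top_mk_of_ne {V : Type*} (P : Set (Set V)) {u v : V} (h : u ≠ v) :
    multicutVec ⊤ P s(u, v) = if ¬ SameBlock P u v then 1 else 0 := by
  simp [multicutVec, crosses_mk_iff, h]

theorem sum_multicutVec_top {V ι : Type*} (P : Set (Set V)) (s : Finset ι) {f g : ι → V}
    (h : ∀ i ∈ s, f i ≠ g i) :
    ∑ i ∈ s, multicutVec ⊤ P s(f i, g i) = #{i ∈ s | ¬ SameBlock P (f i) (g i)} := by
  rw [← sum_boole]
  exact sum_congr rfl fun i hi => multicutVec_top_mk_of_ne P (h i hi)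

theorem sameBlock_iff_mem {V : Type*} {P : Set (Set V)} (hP : Setoid.IsPartition P)
    {B : Set V} (hB : B ∈ P) {u w : V} (hw : w ∈ B) : SameBlock P u w ↔ u ∈ B := by
  refine ⟨fun ⟨U, hU, hu, hwU⟩ => ?_, fun hu => ⟨B, hB, hu, hw⟩⟩
  obtain ⟨_, -, huniq⟩ := hP.2 w
  rwa [huniq U ⟨hU, hwU⟩, ← huniq B ⟨hB, hw⟩] at hu

-- Read `b i` as `v_i ∈ B` and `c i` as "the step `v_i v_{i+1}` is cut"; by `hb`, a sequence
-- that has left `B` and comes back to it stays in `B`.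
theorem card_filter_range_le_card_filter_Icc_add_one {k : ℕ} {b c : ℕ → Prop}
    [DecidablePred b] [DecidablePred c]
    (hc : ∀ i, b i → b (i + 1) → ¬ c i)
    (hb : ∀ j i, j < i → i ≤ k → ¬ b j → b i → b (i + 1)) :
    #{i ∈ range (k + 1) | c i} ≤ #{i ∈ Icc 1 k | ¬ b i} + 1 := by
  have hex : ∃ s, ¬ b s ∨ k + 1 < s := ⟨k + 2, Or.inr (by omega)⟩
  set s := Nat.find hex
  have hbefore : ∀ i < s, b i := fun i hi =>
    not_not.1 (not_or.1 (Nat.find_min hex hi)).1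
  calc #{i ∈ range (k + 1) | c i}
      ≤ #(insert (s - 1) {i ∈ Icc 1 k | ¬ b i}) := by
        refine card_le_card fun i hi => ?_
        simp only [mem_filter, mem_range] at hi
        rcases lt_trichotomy (i + 1) s with hlt | heq | hgt
        · exact absurd hi.2 (hc i (hbefore i (by omega)) (hbefore (i + 1) hlt))
        · exact mem_insert.2 (Or.inl (by omega))
        have hbs : ¬ b s := (Nat.find_spec hex).resolve_right (by omega)
        have hbi : ¬ b i := by
          rcases eq_or_lt_of_le (show s ≤ i by omega) with rfl | hsi
          · exact hbs
          · exact fun hbi => hc i hbi (hb s i hsi (by omega) hbs hbi) hi.2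
        rcases Nat.eq_zero_or_pos i with rfl | hi0
        · exact mem_insert.2 (Or.inl (by omega))
        · exact mem_insert_of_mem (mem_filter.2 ⟨mem_Icc.2 ⟨hi0, by omega⟩, hbi⟩)
    _ ≤ _ := card_insert_le _ _

theorem ZMod.val_add_one_of_lt {n : ℕ} {z : ZMod n} (h : z.val + 1 < n) :
    (z + 1).val = z.val + 1 := by
  have h1 : (1 : ZMod n).val = 1 := by rw [ZMod.val_one_eq_one_mod, Nat.mod_eq_of_lt (by omega)]
  rw [ZMod.val_add_of_lt (by omega), h1]

section cycle

variable {n : ℕ} [NeZero n]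

theorem ZMod.val_sub_one_of_ne_zero {z : ZMod n} (h : z.val ≠ 0) : (z - 1).val = z.val - 1 := by
  have h1 : (1 : ZMod n).val = 1 := by
    rw [ZMod.val_one_eq_one_mod, Nat.mod_eq_of_lt (by have := z.val_lt; omega)]
  rw [ZMod.val_sub (by omega), h1]

theorem val_sub_of_cycleGraph_adj {w a b : ZMod n} (h : (cycleGraph n).Adj a b)
    (h0 : (a - w).val ≠ 0) (hlt : (a - w).val + 1 < n) :
    (b - w).val = (a - w).val + 1 ∨ (b - w).val + 1 = (a - w).val := by
  rcases ((SimpleGraph.fromRel_adj _ _ _).1 h).2 with rfl | rfl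
  · left
    rw [add_sub_right_comm, ZMod.val_add_one_of_lt hlt]
  · right
    rw [add_sub_right_comm] at h0 ⊢
    have := ZMod.val_sub_one_of_ne_zero (z := b - w + 1) h0
    rw [add_sub_cancel_right] at this
    omega

theorem cycleGraph_induce_connected_arc {B : Set (ZMod n)}
    (hB : ((cycleGraph n).induce B).Connected) {w u : ZMod n} (hw : w ∈ B) (hu : u ∈ B) :
    (∀ t, (t - w).val ≤ (u - w).val → t ∈ B) ∨ (∀ t, (u - w).val ≤ (t - w).val → t ∈ B) := by
  by_contra! h
  obtain ⟨⟨t₁, ht₁, ht₁B⟩, ⟨t₂, ht₂, ht₂B⟩⟩ := h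
  have hinj : ∀ {s t : ZMod n}, (s - w).val = (t - w).val → s = t := fun hst =>
    sub_left_injective (ZMod.val_injective n hst)
  have h₁ : (t₁ - w).val < (u - w).val :=
    lt_of_le_of_ne ht₁ fun he => ht₁B (hinj he ▸ hu)
  have h₂ : (u - w).val < (t₂ - w).val :=
    lt_of_le_of_ne ht₂ fun he => ht₂B (hinj he ▸ hu)
  -- a walk from `u` to `w` inside `B` has to leave the arc strictly between `t₁` and `t₂`
  obtain ⟨p⟩ := hB.preconnected ⟨u, hu⟩ ⟨w, hw⟩
  obtain ⟨d, -, hfst, hsnd⟩ := p.exists_boundary_dart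
    {a | (t₁ - w).val < (a - w).val ∧ (a - w).val < (t₂ - w).val} ⟨h₁, h₂⟩
    (by simp)
  simp only [Set.mem_ofPred_eq, not_and_or, not_lt] at hfst hsnd
  have := (t₂ - w).val_lt
  have hadj : (cycleGraph n).Adj d.fst d.snd := d.adj
  have hsnd' : (d.snd - w).val = (t₁ - w).val ∨ (d.snd - w).val = (t₂ - w).val := by
    rcases val_sub_of_cycleGraph_adj (w := w) hadj (by omega) (by omega) with hd | hd <;> omega
  rcases hsnd' with he | he
  · exact ht₁B (hinj he ▸ d.snd.2)
  · exact ht₂B (hinj he ▸ d.snd.2)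

end cycle

theorem glider_inequality_valid_general
    (n k : ℕ) (hn : 3 ≤ n)
    (w : ZMod n) (v : ℕ → ZMod n)
    (htrue : ∀ i ≤ k, (v i - w).val < (v (i + 1) - w).val)
    (x : Sym2 (ZMod n) → ℝ) (hx : x ∈ liftedVectors (cycleGraph n) ⊤) :
    ∑ i ∈ Finset.range (k + 1), x s(v i, v (i + 1))
      - ∑ i ∈ Finset.Icc 1 k, x s(v i, w) ≤ 1 := by
  have : NeZero n := ⟨by omega⟩
  obtain ⟨P, ⟨hP, hconn⟩, rfl⟩ := hx
  obtain ⟨B, ⟨hBP, hwB⟩, -⟩ := hP.2 w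
  have hmono : StrictMonoOn (fun i => (v i - w).val) (Set.Iic (k + 1)) :=
    strictMonoOn_Iic_of_lt_succ fun m hm => by simpa using htrue m (by omega)
  have hcut := sum_multicutVec_top P (range (k + 1)) (f := v) (g := (v <| · + 1))
    fun i hi h => (htrue i (Nat.lt_succ_iff.1 (mem_range.1 hi))).ne (by rw [h])
  have hsep := sum_multicutVec_top P (Icc 1 k) (f := v) (g := fun _ => w) fun i hi h => by
    have hpos : (v 0 - w).val < (v i - w).val :=
      hmono (Set.mem_Iic.2 (Nat.zero_le _)) (Set.mem_Iic.2 (by grind)) (mem_Icc.1 hi).1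
    simp [h] at hpos
  simp only [sameBlock_iff_mem hP hBP hwB] at hsep
  have hescape : ∀ j i, j < i → i ≤ k → v j ∉ B → v i ∈ B → v (i + 1) ∈ B := by
    intro j i hji hik hj hi
    have hle : ∀ {a b}, a ≤ b → b ≤ k + 1 → (v a - w).val ≤ (v b - w).val := fun hab hb =>
      (hmono.le_iff_le (Set.mem_Iic.2 (by omega)) (Set.mem_Iic.2 hb)).2 hab
    rcases cycleGraph_induce_connected_arc (hconn B hBP) hwB hi with hbefore | hafter
    · exact absurd (hbefore _ (hle hji.le (by omega))) hj
    · exact hafter _ (hle (Nat.le_succ i) (by omega))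
  have hcount := card_filter_range_le_card_filter_Icc_add_one (k := k) (b := (v · ∈ B))
    (c := fun i => ¬ SameBlock P (v i) (v (i + 1)))
    (fun i hi hi' => not_not.2 ⟨B, hBP, hi, hi'⟩) hescape
  rw [hcut, hsep, sub_le_iff_le_add']
  exact_mod_cast hcount

/-- validity of the glider inequality for the lifted multicut polytope of
the cycle `C` on `Z_n`: for distinct nodes `w, v_0, …, v_{k+1}` whose cyclic sequence
`⟨w, v_0, …, v_{k+1}⟩` is true to `C` (encoded by strictly increasing cyclic distances
from `w`), every characteristic vector `x` of a multicut of `K_n` lifted from `C`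
satisfies `∑_{i=0}^k x_{v_i v_{i+1}} - ∑_{i=1}^k x_{v_i w} ≤ 1`. -/
theorem glider_inequality_valid
    (n k : ℕ) (hn : 3 ≤ n) (hk : k ≤ n - 3)
    (w : ZMod n) (v : ℕ → ZMod n)
    (hdist : ∀ i j : ℕ, i ≤ k + 1 → j ≤ k + 1 → v i = v j → i = j)
    (hwv : ∀ i ≤ k + 1, v i ≠ w)
    (htrue : ∀ i ≤ k, (v i - w).val < (v (i + 1) - w).val)
    (x : Sym2 (ZMod n) → ℝ) (hx : x ∈ liftedVectors (cycleGraph n) ⊤) :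
    ∑ i ∈ Finset.range (k + 1), x s(v i, v (i + 1))
      - ∑ i ∈ Finset.Icc 1 k, x s(v i, w) ≤ 1 :=
  glider_inequality_valid_general n k hn w v htrue x hx
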